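/- Let n ≥ 3 and let e be a natural number with e ≤ ⌊n²/4⌋ + ⌊(n−1)/2⌋ − 1, and let g(e) = min{|e − x·(n−x)| : x ∈ ℕ, 0 ≤ x ≤ n/2}. Then there exists a simple graph G with n vertices and e edges such that f(G) = g(e)·(n − g(e) − 1). -/

import Mathlib

open Finset

open Classical in
/-- A triple of distinct vertices is *frustrated* if it induces an odd number of edges. -/
noncomputable def frustrated {V : Type*} (G : SimpleGraph V) (u v w : V) : Prop :=
  Odd ((if G.Adj u v then 1 else 0) + (if G.Adj u w then 1 else 0) +
       (if G.Adj v w then 1 else 0) : ℕ)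

/-- The number of frustrated triangles of `G`: the number of 3-element vertex subsets
inducing an odd number of edges. -/
noncomputable def fCount {V : Type*} [Fintype V] [DecidableEq V] (G : SimpleGraph V) : ℕ := by
  classical
  exact ((Finset.univ.powersetCard 3).filter
    (fun s : Finset V => ∃ u v w : V, u ≠ v ∧ u ≠ w ∧ v ≠ w ∧ s = {u, v, w} ∧
      frustrated G u v w)).card

/-!
Start from the complete bipartite graph with parts of sizes `x` and `n - x`, where `x ≤ n / 2`
realises `g`, and take its symmetric difference with a star with `g` leaves: added inside the
larger part when `e ≥ x (n - x)`, removed across the cut otherwise. Frustration is additive mod 2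
under symmetric difference and a cut meets every triangle in an even number of edges, so the
frustrated triangles are those of the star: its centre, a leaf and a non-leaf, `g (n - g - 1)` of
them. Minimality of `g` is what leaves room for the star.
-/

open scoped symmDiff

namespace SimpleGraph

variable {V : Type*}

theorem symmDiff_adj (G H : SimpleGraph V) (u v : V) :
    (G ∆ H).Adj u v ↔ Xor (G.Adj u v) (H.Adj u v) := by
  simp [symmDiff_def, xor_def]

def completeBetween (s t : Set V) : SimpleGraph V :=
  fromRel fun u v => u ∈ s ∧ v ∈ t

variable {s t r : Set V}

theorem completeBetween_adj (hst : Disjoint s t) {u v : V} :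
    (completeBetween s t).Adj u v ↔ u ∈ s ∧ v ∈ t ∨ v ∈ s ∧ u ∈ t := by
  simp only [completeBetween, fromRel_adj, and_iff_right_iff_imp]
  rintro (⟨hu, hv⟩ | ⟨hv, hu⟩) rfl
  exacts [hst.notMem_of_mem_left hu hv, hst.notMem_of_mem_left hv hu]

theorem completeBetween_mono {s' t' : Set V} (hs : s ⊆ s') (ht : t ⊆ t') :
    completeBetween s t ≤ completeBetween s' t' := by
  intro u v
  simp only [completeBetween, fromRel_adj]
  exact And.imp_right (Or.imp (And.imp (@hs _) (@ht _)) (And.imp (@hs _) (@ht _)))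

theorem disjoint_completeBetween_compl (hs : s ⊆ rᶜ) (ht : t ⊆ rᶜ) :
    Disjoint (completeBetween s t) (completeBetween r rᶜ) := by
  rw [← disjoint_edgeSet, Set.disjoint_left, Sym2.forall]
  intro u v huv hr
  rw [mem_edgeSet, completeBetween, fromRel_adj] at huv
  rw [mem_edgeSet, completeBetween_adj disjoint_compl_right] at hr
  grind

theorem edgeSet_completeBetween (hst : Disjoint s t) :
    (completeBetween s t).edgeSet = (fun p : V × V => s(p.1, p.2)) '' s ×ˢ t := by
  ext ⟨u, v⟩
  rw [mem_edgeSet, completeBetween_adj hst]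
  constructor
  · rintro (⟨hu, hv⟩ | ⟨hv, hu⟩)
    exacts [⟨(u, v), ⟨hu, hv⟩, rfl⟩, ⟨(v, u), ⟨hv, hu⟩, Sym2.eq_swap⟩]
  · rintro ⟨⟨a, b⟩, ⟨ha, hb⟩, h⟩
    rcases Sym2.eq_iff.mp h with ⟨rfl, rfl⟩ | ⟨rfl, rfl⟩
    exacts [Or.inl ⟨ha, hb⟩, Or.inr ⟨ha, hb⟩]

theorem ncard_edgeSet_completeBetween (hst : Disjoint s t) :
    (completeBetween s t).edgeSet.ncard = s.ncard * t.ncard := by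
  rw [edgeSet_completeBetween hst, Set.InjOn.ncard_image, Set.ncard_prod]
  rintro ⟨a, b⟩ ⟨ha, hb⟩ ⟨a', b'⟩ ⟨ha', hb'⟩ h
  rcases Sym2.eq_iff.mp h with ⟨rfl, rfl⟩ | ⟨rfl, rfl⟩
  · rfl
  · exact (hst.notMem_of_mem_left ha hb').elim

theorem ncard_edgeSet_completeBetween_singleton {c : V} {L : Finset V} (hc : c ∉ L) :
    (completeBetween {c} (L : Set V)).edgeSet.ncard = #L := by
  rw [ncard_edgeSet_completeBetween (Set.disjoint_singleton_left.mpr hc), Set.ncard_singleton,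
    Set.ncard_coe_finset, one_mul]

theorem ncard_edgeSet_symmDiff_of_disjoint [Finite V] {G H : SimpleGraph V} (h : Disjoint G H) :
    (G ∆ H).edgeSet.ncard = G.edgeSet.ncard + H.edgeSet.ncard := by
  rw [h.symmDiff_eq_sup, edgeSet_sup, Set.ncard_union_eq (disjoint_edgeSet.mpr h)]

theorem ncard_edgeSet_symmDiff_of_le [Finite V] {G H : SimpleGraph V} (h : H ≤ G) :
    (G ∆ H).edgeSet.ncard = G.edgeSet.ncard - H.edgeSet.ncard := by
  rw [symmDiff_of_ge h, edgeSet_sdiff, Set.ncard_sdiff (edgeSet_mono h)]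

end SimpleGraph

open SimpleGraph

section

variable {V : Type*} {G H : SimpleGraph V} {c u v w : V}

theorem frustrated_iff :
    frustrated G u v w ↔ Xor (Xor (G.Adj u v) (G.Adj u w)) (G.Adj v w) := by
  unfold frustrated
  by_cases G.Adj u v <;> by_cases G.Adj u w <;> by_cases G.Adj v w <;>
    simp_all [xor_def, show Odd 3 by decide]

theorem frustrated_comm_left : frustrated G u v w ↔ frustrated G v u w := by
  simp only [frustrated_iff, G.adj_comm u v, xor_def]
  tauto

theorem frustrated_comm_right : frustrated G u v w ↔ frustrated G u w v := by
  simp only [frustrated_iff, G.adj_comm v w, xor_def]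
  tauto

theorem frustrated_symmDiff :
    frustrated (G ∆ H) u v w ↔ Xor (frustrated G u v w) (frustrated H u v w) := by
  simp only [frustrated_iff, symmDiff_adj]
  grind

theorem not_frustrated_completeBetween_compl (s : Set V) (u v w : V) :
    ¬ frustrated (completeBetween s sᶜ) u v w := by
  simp only [frustrated_iff, completeBetween_adj disjoint_compl_right, Set.mem_compl_iff, xor_def]
  tauto

section Star

variable {L : Set V}

theorem completeBetween_singleton_adj (hc : c ∉ L) :
    (completeBetween {c} L).Adj u v ↔ u = c ∧ v ∈ L ∨ v = c ∧ u ∈ L := by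
  simp [completeBetween_adj (Set.disjoint_singleton_left.mpr hc)]

theorem eq_or_eq_or_eq_of_frustrated_completeBetween_singleton (hc : c ∉ L)
    (h : frustrated (completeBetween {c} L) u v w) : u = c ∨ v = c ∨ w = c := by
  by_contra! hne
  simp [frustrated_iff, completeBetween_singleton_adj hc, hne] at h

theorem frustrated_completeBetween_singleton_center (hc : c ∉ L) (hv : v ≠ c) (hw : w ≠ c) :
    frustrated (completeBetween {c} L) c v w ↔ Xor (v ∈ L) (w ∈ L) := by
  simp [frustrated_iff, completeBetween_singleton_adj hc, hv, hw, xor_def]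

theorem exists_frustrated_completeBetween_singleton_iff [DecidableEq V] (hc : c ∉ L)
    (s : Finset V) :
    (∃ u v w : V, u ≠ v ∧ u ≠ w ∧ v ≠ w ∧ s = {u, v, w} ∧
      frustrated (completeBetween {c} L) u v w) ↔
      ∃ l ∈ L, ∃ x, x ≠ c ∧ x ∉ L ∧ s = {c, l, x} := by
  constructor
  · rintro ⟨u, v, w, huv, huw, hvw, rfl, h⟩
    wlog hu : u = c generalizing u v w
    · rcases eq_or_eq_or_eq_of_frustrated_completeBetween_singleton hc h with rfl | rfl | rfl
      · exact absurd rfl hu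
      · rw [Finset.insert_comm u v]
        exact this v u w huv.symm hvw huw (frustrated_comm_left.mp h) rfl
      · rw [Finset.pair_comm v w, Finset.insert_comm u w]
        exact this w u v huw.symm hvw.symm huv
          (frustrated_comm_left.mp (frustrated_comm_right.mp h)) rfl
    subst hu
    rw [frustrated_completeBetween_singleton_center hc huv.symm huw.symm, xor_def] at h
    rcases h with ⟨hv, hw⟩ | ⟨hw, hv⟩
    · exact ⟨v, hv, w, huw.symm, hw, rfl⟩
    · exact ⟨w, hw, v, huv.symm, hv, by rw [Finset.pair_comm]⟩
  · rintro ⟨l, hl, x, hxc, hxL, rfl⟩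
    have hlc : l ≠ c := fun h => hc (h ▸ hl)
    refine ⟨c, l, x, hlc.symm, hxc.symm, fun h => hxL (h ▸ hl), rfl, ?_⟩
    exact (frustrated_completeBetween_singleton_center hc hlc hxc).mpr (Or.inl ⟨hl, hxL⟩)

end Star

section Fintype

variable [Fintype V] [DecidableEq V]

theorem fCount_congr (h : ∀ u v w, frustrated G u v w ↔ frustrated H u v w) :
    fCount G = fCount H := by
  classical
  rw [fCount, fCount]
  exact congrArg card (filter_congr fun s _ => by simp only [h])

theorem fCount_symmDiff_of_forall_not_frustrated (hG : ∀ u v w, ¬ frustrated G u v w) :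
    fCount (G ∆ H) = fCount H :=
  fCount_congr fun u v w => by simp [frustrated_symmDiff, xor_def, hG]

theorem fCount_completeBetween_singleton {L : Finset V} (hc : c ∉ L) :
    fCount (completeBetween {c} (L : Set V)) = #L * (Fintype.card V - #L - 1) := by
  classical
  have hinj : Set.InjOn (fun p : V × V => ({c, p.1, p.2} : Finset V))
      ↑(L ×ˢ (insert c L)ᶜ) := by
    rintro ⟨l, x⟩ hlx ⟨l', x'⟩ hlx' h
    simp only [coe_product, coe_compl, coe_insert, Set.mem_prod, mem_coe, Set.mem_compl_iff,
      Set.mem_insert_iff, not_or] at hlx hlx' h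
    have hl : l ∈ ({c, l', x'} : Finset V) := h ▸ by simp
    have hx : x ∈ ({c, l', x'} : Finset V) := h ▸ by simp
    simp only [mem_insert, mem_singleton] at hl hx
    grind
  have hcard : #((L ×ˢ (insert c L)ᶜ).image fun p : V × V => ({c, p.1, p.2} : Finset V)) =
      #L * (Fintype.card V - #L - 1) := by
    rw [card_image_of_injOn hinj, card_product, card_compl, card_insert_of_notMem hc,
      Nat.sub_sub]
  rw [← hcard, fCount]
  congr 1
  ext s
  rw [mem_filter, exists_frustrated_completeBetween_singleton_iff (mem_coe.not.mpr hc), mem_image]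
  constructor
  · rintro ⟨-, l, hl, x, hxc, hxL, rfl⟩
    exact ⟨(l, x), by simp_all, rfl⟩
  · rintro ⟨⟨l, x⟩, hlx, rfl⟩
    simp only [mem_product, mem_compl, mem_insert, not_or] at hlx
    refine ⟨mem_powersetCard.mpr ⟨subset_univ _, card_eq_three.mpr ⟨c, l, x, ?_⟩⟩,
      l, hlx.1, x, hlx.2.1, hlx.2.2, rfl⟩
    grind

theorem ncard_edgeSet_completeBetween_compl (A : Finset V) :
    (completeBetween (A : Set V) (A : Set V)ᶜ).edgeSet.ncard = #A * (Fintype.card V - #A) := by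
  rw [ncard_edgeSet_completeBetween disjoint_compl_right, ← coe_compl, Set.ncard_coe_finset,
    Set.ncard_coe_finset, card_compl]

theorem fCount_completeBetween_compl_symmDiff (A : Set V) {L : Finset V} (hc : c ∉ L) :
    fCount (completeBetween A Aᶜ ∆ completeBetween {c} (L : Set V)) =
      #L * (Fintype.card V - #L - 1) := by
  rw [fCount_symmDiff_of_forall_not_frustrated (not_frustrated_completeBetween_compl A),
    fCount_completeBetween_singleton hc]

theorem exists_ncard_edgeSet_eq_add_and_fCount_eq {x m : ℕ} (h : x + m + 1 ≤ Fintype.card V) :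
    ∃ G : SimpleGraph V, G.edgeSet.ncard = x * (Fintype.card V - x) + m ∧
      fCount G = m * (Fintype.card V - m - 1) := by
  obtain ⟨A, -, hA⟩ := exists_subset_card_eq (s := (univ : Finset V)) (n := x) (by rw [card_univ]; omega)
  obtain ⟨c, hc⟩ : (Aᶜ).Nonempty := by rw [← card_pos, card_compl]; omega
  obtain ⟨L, hL, hLm⟩ := exists_subset_card_eq (s := Aᶜ.erase c) (n := m)
    (by rw [card_erase_of_mem hc, card_compl]; omega)
  have hcL : c ∉ L := fun h => by simpa using hL h
  have hdisj : Disjoint (completeBetween {c} (L : Set V)) (completeBetween A (A : Set V)ᶜ) :=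
    disjoint_completeBetween_compl (by simpa using hc)
      (by simpa [← coe_compl] using hL.trans (erase_subset c Aᶜ))
  subst hA hLm
  refine ⟨_, ?_, fCount_completeBetween_compl_symmDiff A hcL⟩
  rw [ncard_edgeSet_symmDiff_of_disjoint hdisj.symm, ncard_edgeSet_completeBetween_compl,
    ncard_edgeSet_completeBetween_singleton hcL]

theorem exists_ncard_edgeSet_eq_sub_and_fCount_eq {x m : ℕ} (hx : 0 < x)
    (h : x + m ≤ Fintype.card V) :
    ∃ G : SimpleGraph V, G.edgeSet.ncard = x * (Fintype.card V - x) - m ∧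
      fCount G = m * (Fintype.card V - m - 1) := by
  obtain ⟨A, -, hA⟩ := exists_subset_card_eq (s := (univ : Finset V)) (n := x) (by rw [card_univ]; omega)
  obtain ⟨c, hc⟩ : A.Nonempty := by rw [← card_pos]; omega
  obtain ⟨L, hL, hLm⟩ := exists_subset_card_eq (s := Aᶜ) (n := m) (by rw [card_compl]; omega)
  have hcL : c ∉ L := fun h => by simpa [hc] using hL h
  have hle : completeBetween {c} (L : Set V) ≤ completeBetween A (A : Set V)ᶜ :=
    completeBetween_mono (by simpa using hc) (by simpa [← coe_compl] using hL)
  subst hA hLm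
  refine ⟨_, ?_, fCount_completeBetween_compl_symmDiff A hcL⟩
  rw [ncard_edgeSet_symmDiff_of_le hle, ncard_edgeSet_completeBetween_compl,
    ncard_edgeSet_completeBetween_singleton hcL]

end Fintype

end

section NearestCut

variable {n e g x : ℕ}

theorem div_two_mul_sub_div_two (n : ℕ) : n / 2 * (n - n / 2) = n ^ 2 / 4 := by
  rcases Nat.even_or_odd' n with ⟨k, rfl | rfl⟩
  · rw [show 2 * k / 2 = k by omega, show 2 * k - k = k by omega,
      show (2 * k) ^ 2 = 4 * (k * k) by ring]
    omega
  · rw [show (2 * k + 1) / 2 = k by omega, show 2 * k + 1 - k = k + 1 by omega,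
      show (2 * k + 1) ^ 2 = 4 * (k * (k + 1)) + 1 by ring]
    omega

theorem add_add_one_le_of_forall_le_natAbs (hn : 0 < n) (hx : x ≤ n / 2)
    (he : e ≤ n ^ 2 / 4 + (n - 1) / 2 - 1)
    (hmin : ∀ y ≤ n / 2, g ≤ ((e : ℤ) - y * ((n : ℤ) - y)).natAbs)
    (hg : (e : ℤ) = x * ((n : ℤ) - x) + g) : x + g + 1 ≤ n := by
  -- moving a vertex across the cut changes `x (n - x)` by `n - 2x - 1`, so minimality forces
  -- `2g < n - 2x`; at `x = n / 2` the bound on `e` does the same job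
  rcases Nat.lt_or_ge x (n / 2) with hlt | hge
  · have h := hmin (x + 1) hlt
    rw [show (e : ℤ) - ((x + 1 : ℕ) : ℤ) * ((n : ℤ) - (x + 1 : ℕ)) =
        g - (n - 2 * x - 1) by rw [hg]; push_cast; ring] at h
    omega
  · have hxn : x = n / 2 := by omega
    have hp : ((n ^ 2 / 4 : ℕ) : ℤ) = x * ((n : ℤ) - x) := by
      rw [← div_two_mul_sub_div_two, ← hxn, Nat.cast_mul, Nat.cast_sub (by omega)]
    omega

theorem pos_and_add_le_of_forall_le_natAbs (hx : x ≤ n / 2)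
    (hmin : ∀ y ≤ n / 2, g ≤ ((e : ℤ) - y * ((n : ℤ) - y)).natAbs)
    (hg : (e : ℤ) = x * ((n : ℤ) - x) - g) (hg0 : 0 < g) : 0 < x ∧ x + g ≤ n := by
  have hx0 : 0 < x := by
    by_contra! h
    simp [Nat.le_zero.mp h] at hg
    omega
  have h := hmin (x - 1) (by omega)
  rw [show (e : ℤ) - ((x - 1 : ℕ) : ℤ) * ((n : ℤ) - (x - 1 : ℕ)) = (n - 2 * x + 1) - g by
    rw [Nat.cast_sub hx0, hg]; push_cast; ring] at h
  omega

end NearestCut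

theorem frustrated_triangles_lower_bound_achieved
    (n : ℕ) (hn : 3 ≤ n) (e : ℕ) (he : e ≤ n ^ 2 / 4 + (n - 1) / 2 - 1) (g : ℕ)
    (hg : IsLeast {d : ℕ | ∃ x : ℕ, x ≤ n / 2 ∧ d = ((e : ℤ) - x * ((n : ℤ) - x)).natAbs} g) :
    ∃ G : SimpleGraph (Fin n), G.edgeSet.ncard = e ∧ fCount G = g * (n - g - 1) := by
  obtain ⟨⟨x, hx, rfl⟩, hmin⟩ := hg
  replace hmin : ∀ y ≤ n / 2, _ ≤ ((e : ℤ) - y * ((n : ℤ) - y)).natAbs :=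
    fun y hy => hmin ⟨y, hy, rfl⟩
  have hp : ((x * (n - x) : ℕ) : ℤ) = x * ((n : ℤ) - x) := by
    rw [Nat.cast_mul, Nat.cast_sub (by omega)]
  rcases le_or_gt (x * ((n : ℤ) - x)) e with hle | hlt
  · have hroom := add_add_one_le_of_forall_le_natAbs (by omega) hx he hmin (by omega)
    obtain ⟨G, hGe, hGf⟩ := exists_ncard_edgeSet_eq_add_and_fCount_eq (V := Fin n)
      (by rwa [Fintype.card_fin])
    rw [Fintype.card_fin] at hGe hGf
    exact ⟨G, by omega, hGf⟩
  · obtain ⟨hx0, hroom⟩ := pos_and_add_le_of_forall_le_natAbs hx hmin (by omega) (by omega)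
    obtain ⟨G, hGe, hGf⟩ := exists_ncard_edgeSet_eq_sub_and_fCount_eq (V := Fin n) hx0
      (by rwa [Fintype.card_fin])
    rw [Fintype.card_fin] at hGe hGf
    exact ⟨G, by omega, hGf⟩
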